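/- arXiv:1904.11048 — 3 statements merged into one kernel-verified Lean document; each statement's English description precedes it below -/
import Mathlib

section
/- For any element w of a finite Coxeter group W and any subset J of the simple reflections, the parabolic subgroup W_J contains a unique maximal element (in Bruhat order) among its elements that lie below w in Bruhat order. -/
/-!
The sign representation lets `W` act on `W × ℤˣ`, the simple reflection `sᵢ` by
`(t, e) ↦ (sᵢ t sᵢ, ±e)` with the sign flipped exactly when `t = sᵢ`. Its sign component
`η = reflectionSign` is a cocycle with `η w t = -1 ↔ ℓ (w t) < ℓ w` for every reflection `t`, so
a right inversion `t` of `w` stays one of `sᵢ w` unless `w t w⁻¹ = sᵢ`. This gives the lifting property of the Bruhat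
order (if `sᵢ` is a left descent of `w` but not of `u ≤ w`, then `u ≤ sᵢ w` and `sᵢ u ≤ w`), and
shows that a left descent of an element of `W_J` lies in `W_J`. The maximum below `w` is then
built by induction on `ℓ w`: if `sᵢ` is a left descent of `w` and `m` is the maximum below `sᵢ w`,
the maximum below `w` is the longer of `m` and `sᵢ m` when `sᵢ ∈ W_J`, and `m` otherwise.
-/

/-- The strong Bruhat order on a Coxeter group: the reflexive-transitive closure of the
relation relating `a` to `a * t` (`t` a reflection) when the length increases. -/
def CoxeterSystem.bruhatLE {B W : Type*} [Group W] {M : CoxeterMatrix B}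
    (cs : CoxeterSystem M W) : W → W → Prop :=
  Relation.ReflTransGen (fun a b => cs.length a < cs.length b ∧
    ∃ t : W, cs.IsReflection t ∧ b = a * t)

open Finset

theorem Finset.prod_range_two_mul {M : Type*} [CommMonoid M] (f : ℕ → M) (m : ℕ) :
    ∏ k ∈ range (2 * m), f k = ∏ j ∈ range m, (f (2 * j) * f (2 * j + 1)) := by
  induction m with
  | zero => simp
  | succ m ih => rw [mul_add_one, prod_range_succ, prod_range_succ, prod_range_succ, ih, mul_assoc]

section SignAt

variable {α : Type*}

open Classical in
noncomputable def signAt (r t : α) : ℤˣ := if t = r then -1 else 1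

theorem signAt_self (r : α) : signAt r r = -1 := if_pos rfl

theorem signAt_of_ne {r t : α} (h : t ≠ r) : signAt r t = 1 := if_neg h

theorem eq_of_signAt_eq_neg_one {r t : α} (h : signAt r t = -1) : t = r := by
  by_contra hne
  rw [signAt_of_ne hne] at h
  exact absurd h (by decide)

end SignAt

section Group

variable {G : Type*} [Group G]

theorem signAt_conj (r g t : G) : signAt r (g * t * g⁻¹) = signAt (g⁻¹ * r * g) t := by
  have : g * t * g⁻¹ = r ↔ t = g⁻¹ * r * g := by
    constructor <;> rintro rfl <;> group
  unfold signAt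
  congr 1
  exact propext this

theorem prod_range_two_mul_signAt_pow_mul {q : G} {m : ℕ} (hq : q ^ m = 1) (r t : G) :
    ∏ k ∈ range (2 * m), signAt (q ^ k * r) t = 1 := by
  rw [two_mul, prod_range_add]
  simp only [pow_add, hq, one_mul, Int.units_mul_self]

def twistedConj (g : G) (c : G → ℤˣ) : Function.End (G × ℤˣ) :=
  fun x => (g * x.1 * g⁻¹, x.2 * c x.1)

theorem twistedConj_mul (g h : G) (c d : G → ℤˣ) :
    twistedConj g c * twistedConj h d = twistedConj (g * h) (fun t => d t * c (h * t * h⁻¹)) := by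
  funext x
  change twistedConj g c (twistedConj h d x) = _
  simp only [twistedConj, mul_inv_rev, mul_assoc]

theorem twistedConj_pow (g : G) (c : G → ℤˣ) (k : ℕ) :
    twistedConj g c ^ k =
      twistedConj (g ^ k) (fun t => ∏ j ∈ range k, c (g ^ j * t * (g ^ j)⁻¹)) := by
  induction k with
  | zero => funext x; simp [twistedConj]; rfl
  | succ k ih => rw [pow_succ', ih, twistedConj_mul, ← pow_succ']; simp [prod_range_succ]

theorem twistedConj_one : twistedConj (1 : G) 1 = 1 := by
  funext x; simp [twistedConj]; rfl

end Group

namespace CoxeterSystem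

variable {B W : Type*} [Group W] {M : CoxeterMatrix B} (cs : CoxeterSystem M W)

local prefix:100 "s" => cs.simple
local prefix:100 "ℓ" => cs.length

theorem isLiftable_twistedConj_simple :
    M.IsLiftable (fun i => twistedConj (s i) (signAt (s i))) := by
  intro i i'
  set p := s i * s i'
  set q := s i' * s i
  have hsq (j : ℕ) : s i' * p ^ j = q ^ j * s i' :=
    (SemiconjBy.pow_right (by simp only [SemiconjBy, p, q, mul_assoc]) j).eq
  have hinv (j : ℕ) : (p ^ j)⁻¹ = q ^ j := by
    rw [← inv_pow, mul_inv_rev, inv_simple, inv_simple]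
  have h₁ (j : ℕ) : (p ^ j)⁻¹ * s i' * p ^ j = q ^ (2 * j) * s i' := by
    rw [hinv, mul_assoc, hsq, ← mul_assoc, ← pow_add, two_mul]
  have h₂ (j : ℕ) : (p ^ j)⁻¹ * ((s i')⁻¹ * s i) * s i' * p ^ j = q ^ (2 * j + 1) * s i' := by
    calc (p ^ j)⁻¹ * ((s i')⁻¹ * s i) * s i' * p ^ j = q ^ j * q * (s i' * p ^ j) := by
          simp only [hinv, inv_simple, q, mul_assoc]
      _ = q ^ (2 * j + 1) * s i' := by
          rw [hsq, show 2 * j + 1 = j + 1 + j by ring, pow_add, pow_succ]; simp only [mul_assoc]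
  -- The sign of `(σᵢ σᵢ')^m` at `t` runs over two full periods of an `m`-periodic sequence.
  rw [twistedConj_mul, twistedConj_pow, cs.simple_mul_simple_pow, ← twistedConj_one]
  congr 1
  funext t
  rw [Pi.one_apply, ← prod_range_two_mul_signAt_pow_mul (cs.simple_mul_simple_pow' i i') (s i') t,
    prod_range_two_mul]
  refine prod_congr rfl fun j _ => ?_
  rw [signAt_conj, signAt_conj, signAt_conj, ← mul_assoc, h₁, h₂]

noncomputable def signRep : W →* Function.End (W × ℤˣ) :=
  cs.lift ⟨_, cs.isLiftable_twistedConj_simple⟩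

theorem signRep_simple (i : B) : cs.signRep (s i) = twistedConj (s i) (signAt (s i)) :=
  cs.lift_apply_simple _ i

noncomputable def reflectionSign (w t : W) : ℤˣ := (cs.signRep w (t, 1)).2

theorem signRep_eq_twistedConj (w : W) : cs.signRep w = twistedConj w (cs.reflectionSign w) := by
  suffices ∃ c, cs.signRep w = twistedConj w c by
    obtain ⟨c, hc⟩ := this
    rw [hc]
    congr 1
    funext t
    simp [reflectionSign, hc, twistedConj]
  refine cs.simple_induction_left (p := fun w => ∃ c, cs.signRep w = twistedConj w c) w
    ⟨1, by rw [map_one, twistedConj_one]⟩ ?_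
  rintro w i ⟨c, hc⟩
  exact ⟨_, by rw [map_mul, hc, signRep_simple, twistedConj_mul]⟩

theorem reflectionSign_mul (x y t : W) :
    cs.reflectionSign (x * y) t = cs.reflectionSign y t * cs.reflectionSign x (y * t * y⁻¹) := by
  have := congrArg (fun f : Function.End (W × ℤˣ) => (f (t, 1)).2) (map_mul cs.signRep x y)
  simpa [signRep_eq_twistedConj, twistedConj_mul, twistedConj] using this

theorem reflectionSign_one (t : W) : cs.reflectionSign 1 t = 1 := by
  simp [reflectionSign]; rfl

theorem reflectionSign_simple (i : B) (t : W) : cs.reflectionSign (s i) t = signAt (s i) t := by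
  simp [reflectionSign, signRep_simple, twistedConj]

theorem reflectionSign_inv (x t : W) :
    cs.reflectionSign x⁻¹ t = cs.reflectionSign x (x⁻¹ * t * x) := by
  have := cs.reflectionSign_mul x x⁻¹ t
  rw [mul_inv_cancel, reflectionSign_one, inv_inv, eq_comm] at this
  rw [eq_inv_of_mul_eq_one_left this, Int.units_inv_eq_self]

theorem reflectionSign_self {t : W} (ht : cs.IsReflection t) : cs.reflectionSign t t = -1 := by
  obtain ⟨u, i, rfl⟩ := ht
  have hconj : u⁻¹ * (u * s i * u⁻¹) * u = s i := by group
  rw [reflectionSign_mul, inv_inv, hconj, reflectionSign_mul, reflectionSign_simple, signAt_self,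
    reflectionSign_inv, hconj, mul_inv_cancel_right, neg_one_mul, mul_neg, Int.units_mul_self]

theorem length_mul_lt_of_reflectionSign_eq_neg_one {w t : W} (h : cs.reflectionSign w t = -1) :
    ℓ (w * t) < ℓ w := by
  induction hn : ℓ w using Nat.strong_induction_on generalizing w with
  | _ n ih =>
  rcases eq_or_ne w 1 with rfl | hw
  · rw [reflectionSign_one] at h
    exact absurd h (by decide)
  obtain ⟨i, hi⟩ := cs.exists_leftDescent_of_ne_one hw
  have hw' : s i * (s i * w) = w := cs.simple_mul_simple_cancel_left i
  rw [← hw', reflectionSign_mul] at h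
  rw [← hn]
  by_cases hc : s i * w * t * (s i * w)⁻¹ = s i
  · have hwt : w * t = s i * w := by
      have := mul_inv_eq_iff_eq_mul.mp hc
      rw [mul_assoc] at this
      exact mul_left_cancel this
    rwa [hwt]
  · rw [reflectionSign_simple, signAt_of_ne hc, mul_one] at h
    have hlt := ih _ (hn ▸ hi) h rfl
    have hwt : w * t = s i * (s i * w * t) := by rw [mul_assoc, simple_mul_simple_cancel_left]
    rw [hwt]
    have := cs.length_simple_mul (s i * w * t) i
    unfold IsLeftDescent at hi
    omega

theorem reflectionSign_eq_neg_one_iff {w t : W} (ht : cs.IsReflection t) :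
    cs.reflectionSign w t = -1 ↔ ℓ (w * t) < ℓ w := by
  refine ⟨cs.length_mul_lt_of_reflectionSign_eq_neg_one, fun hlt => by_contra fun h => ?_⟩
  have h₁ : cs.reflectionSign w t = 1 := (Int.units_eq_one_or _).resolve_right h
  have h₂ : cs.reflectionSign (w * t) t = -1 := by
    rw [reflectionSign_mul, cs.reflectionSign_self ht, ht.mul_self, one_mul, ht.inv, h₁, mul_one]
  have := cs.length_mul_lt_of_reflectionSign_eq_neg_one h₂
  rw [mul_assoc, ht.mul_self, mul_one] at this
  omega

theorem isRightInversion_simple_mul {w t : W} (h : cs.IsRightInversion w t) {i : B}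
    (hne : w * t * w⁻¹ ≠ s i) : cs.IsRightInversion (s i * w) t := by
  refine ⟨h.1, ?_⟩
  rw [← reflectionSign_eq_neg_one_iff _ h.1, reflectionSign_mul, reflectionSign_simple,
    signAt_of_ne hne, mul_one, reflectionSign_eq_neg_one_iff _ h.1]
  exact h.2

theorem mem_closure_of_reflectionSign_eq_neg_one {J : Set B} {u : W}
    (hu : u ∈ Subgroup.closure (cs.simple '' J)) {t : W} (h : cs.reflectionSign u t = -1) :
    t ∈ Subgroup.closure (cs.simple '' J) := by
  induction hu using Subgroup.closure_induction generalizing t with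
  | mem x hx =>
    obtain ⟨j, hj, rfl⟩ := hx
    rw [reflectionSign_simple] at h
    exact eq_of_signAt_eq_neg_one h ▸ Subgroup.subset_closure ⟨j, hj, rfl⟩
  | one =>
    rw [reflectionSign_one] at h
    exact absurd h (by decide)
  | mul x y hx hy ihx ihy =>
    rw [reflectionSign_mul] at h
    rcases Int.units_eq_one_or (cs.reflectionSign y t) with hyt | hyt
    · rw [hyt, one_mul] at h
      have := Subgroup.mul_mem _ (Subgroup.mul_mem _ (Subgroup.inv_mem _ hy) (ihx h)) hy
      rwa [← mul_assoc, ← mul_assoc, inv_mul_cancel, one_mul, inv_mul_cancel_right] at this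
    · exact ihy hyt
  | inv x hx ihx =>
    rw [reflectionSign_inv] at h
    have := Subgroup.mul_mem _ (Subgroup.mul_mem _ hx (ihx h)) (Subgroup.inv_mem _ hx)
    rwa [← mul_assoc, ← mul_assoc, mul_inv_cancel, one_mul, mul_inv_cancel_right] at this

theorem simple_mem_closure_of_isLeftDescent {J : Set B} {u : W}
    (hu : u ∈ Subgroup.closure (cs.simple '' J)) {i : B} (hi : cs.IsLeftDescent u i) :
    s i ∈ Subgroup.closure (cs.simple '' J) := by
  rw [← isRightDescent_inv_iff, IsRightDescent,
    ← cs.reflectionSign_eq_neg_one_iff (cs.isReflection_simple i)] at hi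
  exact cs.mem_closure_of_reflectionSign_eq_neg_one (Subgroup.inv_mem _ hu) hi

theorem bruhatLE_mul {u t : W} (ht : cs.IsReflection t) (h : ℓ u < ℓ (u * t)) :
    cs.bruhatLE u (u * t) :=
  Relation.ReflTransGen.single ⟨h, t, ht, rfl⟩

theorem bruhatLE_simple_mul_self {u : W} {i : B} (h : ¬cs.IsLeftDescent u i) :
    cs.bruhatLE u (s i * u) := by
  have hu : s i * u = u * (u⁻¹ * s i * u) := by group
  rw [not_isLeftDescent_iff] at h
  rw [hu] at h ⊢
  exact cs.bruhatLE_mul (by simpa using (cs.isReflection_simple i).conj u⁻¹) (by omega)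

theorem simple_mul_bruhatLE_self {u : W} {i : B} (h : cs.IsLeftDescent u i) :
    cs.bruhatLE (s i * u) u := by
  rw [isLeftDescent_iff_not_isLeftDescent_mul] at h
  simpa using cs.bruhatLE_simple_mul_self h

theorem eq_or_length_lt_of_bruhatLE {u v : W} (h : cs.bruhatLE u v) : u = v ∨ ℓ u < ℓ v := by
  induction h with
  | refl => exact Or.inl rfl
  | tail _ step ih => exact Or.inr (ih.elim (· ▸ step.1) (·.trans step.1))

theorem bruhatLE_antisymm {u v : W} (h₁ : cs.bruhatLE u v) (h₂ : cs.bruhatLE v u) : u = v := by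
  rcases cs.eq_or_length_lt_of_bruhatLE h₁ with h | h₁
  · exact h
  rcases cs.eq_or_length_lt_of_bruhatLE h₂ with h | h₂
  · exact h.symm
  omega

theorem eq_one_of_bruhatLE_one {u : W} (h : cs.bruhatLE u 1) : u = 1 :=
  (cs.eq_or_length_lt_of_bruhatLE h).resolve_right (by simp)

theorem simple_mul_mul_eq_or_bruhatLE {x t : W} (ht : cs.IsReflection t) (h : ℓ x < ℓ (x * t))
    (i : B) : s i * (x * t) = x ∨ cs.bruhatLE (s i * x) (s i * x * t) := by
  by_cases hc : x * t * x⁻¹ = s i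
  · left
    rw [← hc, mul_assoc, inv_mul_cancel_left, mul_assoc, ht.mul_self, mul_one]
  · right
    have hxt : x * t * t = x := by rw [mul_assoc, ht.mul_self, mul_one]
    have hinv : cs.IsRightInversion (x * t) t := ⟨ht, by rwa [hxt]⟩
    have := (cs.isRightInversion_simple_mul hinv (by rwa [mul_inv_rev, ht.inv, ← mul_assoc, hxt])).2
    rw [mul_assoc, mul_assoc, ht.mul_self, mul_one] at this
    exact cs.bruhatLE_mul ht (by rwa [mul_assoc])

theorem bruhatLE_simple_mul_of_bruhatLE {u w : W} {i : B} (hw : cs.IsLeftDescent w i)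
    (hu : ¬cs.IsLeftDescent u i) (h : cs.bruhatLE u w) : cs.bruhatLE u (s i * w) := by
  induction h with
  | refl => exact absurd hw hu
  | @tail v _ hle step ih =>
    obtain ⟨hlen, t, ht, rfl⟩ := step
    by_cases hv : cs.IsLeftDescent v i
    · rw [← mul_assoc]
      refine (ih hv).trans (cs.bruhatLE_mul ht ?_)
      rw [isLeftDescent_iff] at hv hw
      rw [mul_assoc]
      omega
    · rcases cs.simple_mul_mul_eq_or_bruhatLE ht hlen i with heq | hle'
      · rwa [heq]
      · rw [← mul_assoc]
        exact hle.trans ((cs.bruhatLE_simple_mul_self hv).trans hle')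

theorem simple_mul_bruhatLE_of_bruhatLE {u w : W} {i : B} (hw : cs.IsLeftDescent w i)
    (h : cs.bruhatLE u w) : cs.bruhatLE (s i * u) w := by
  by_cases hu : cs.IsLeftDescent u i
  · exact (cs.simple_mul_bruhatLE_self hu).trans h
  induction h using Relation.ReflTransGen.head_induction_on with
  | refl => exact absurd hw hu
  | @head a _ step hle ih =>
    obtain ⟨hlen, t, ht, rfl⟩ := step
    by_cases ha : cs.IsLeftDescent (a * t) i
    · rcases cs.simple_mul_mul_eq_or_bruhatLE ht hlen i with heq | hle'
      · rwa [← heq, simple_mul_simple_cancel_left]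
      · rw [mul_assoc] at hle'
        exact hle'.trans ((cs.simple_mul_bruhatLE_self ha).trans hle)
    · refine (cs.bruhatLE_mul ht ?_).trans (mul_assoc (s i) a t ▸ ih ha)
      rw [not_isLeftDescent_iff] at hu ha
      rw [mul_assoc]
      omega

def IsGreatestBelow (K : Subgroup W) (w m : W) : Prop :=
  m ∈ K ∧ cs.bruhatLE m w ∧ ∀ u ∈ K, cs.bruhatLE u w → cs.bruhatLE u m

variable {cs}

theorem IsGreatestBelow.unique {K : Subgroup W} {w m₁ m₂ : W} (h₁ : cs.IsGreatestBelow K w m₁)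
    (h₂ : cs.IsGreatestBelow K w m₂) : m₁ = m₂ :=
  cs.bruhatLE_antisymm (h₂.2.2 m₁ h₁.1 h₁.2.1) (h₁.2.2 m₂ h₂.1 h₂.2.1)

theorem isGreatestBelow_one (K : Subgroup W) : cs.IsGreatestBelow K 1 1 :=
  ⟨K.one_mem, .refl, fun _ _ hu => cs.eq_one_of_bruhatLE_one hu ▸ .refl⟩

theorem IsGreatestBelow.of_simple_mul_of_not_mem {J : Set B} {w m : W} {i : B}
    (hw : cs.IsLeftDescent w i) (hs : s i ∉ Subgroup.closure (cs.simple '' J))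
    (hm : cs.IsGreatestBelow (Subgroup.closure (cs.simple '' J)) (s i * w) m) :
    cs.IsGreatestBelow (Subgroup.closure (cs.simple '' J)) w m :=
  ⟨hm.1, hm.2.1.trans (cs.simple_mul_bruhatLE_self hw), fun u hu huw =>
    hm.2.2 u hu (cs.bruhatLE_simple_mul_of_bruhatLE hw
      (fun hui => hs (cs.simple_mem_closure_of_isLeftDescent hu hui)) huw)⟩

theorem IsGreatestBelow.exists_of_simple_mul_of_mem {K : Subgroup W} {w m : W} {i : B}
    (hw : cs.IsLeftDescent w i) (hs : s i ∈ K) (hm : cs.IsGreatestBelow K (s i * w) m) :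
    ∃ m', cs.IsGreatestBelow K w m' := by
  obtain ⟨m', hm'K, hm'i, hmm', hm'w⟩ : ∃ m' ∈ K, cs.IsLeftDescent m' i ∧ cs.bruhatLE m m' ∧
      cs.bruhatLE m' w := by
    have hmw := hm.2.1.trans (cs.simple_mul_bruhatLE_self hw)
    by_cases hmi : cs.IsLeftDescent m i
    · exact ⟨m, hm.1, hmi, .refl, hmw⟩
    · refine ⟨s i * m, K.mul_mem hs hm.1, ?_, cs.bruhatLE_simple_mul_self hmi,
        cs.simple_mul_bruhatLE_of_bruhatLE hw hmw⟩
      rwa [isLeftDescent_iff_not_isLeftDescent_mul, simple_mul_simple_cancel_left]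
  have below_of_not_isLeftDescent : ∀ x ∈ K, ¬cs.IsLeftDescent x i → cs.bruhatLE x w →
      cs.bruhatLE x m' := fun x hx hxi hxw =>
    (hm.2.2 x hx (cs.bruhatLE_simple_mul_of_bruhatLE hw hxi hxw)).trans hmm'
  refine ⟨m', hm'K, hm'w, fun u hu huw => ?_⟩
  by_cases hui : cs.IsLeftDescent u i
  · have hsu : ¬cs.IsLeftDescent (s i * u) i := by
      rwa [← isLeftDescent_iff_not_isLeftDescent_mul]
    have := below_of_not_isLeftDescent (s i * u) (K.mul_mem hs hu) hsu
      ((cs.simple_mul_bruhatLE_self hui).trans huw)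
    simpa using cs.simple_mul_bruhatLE_of_bruhatLE hm'i this
  · exact below_of_not_isLeftDescent u hu hui huw

theorem exists_isGreatestBelow_closure_simple (J : Set B) (w : W) :
    ∃ m, cs.IsGreatestBelow (Subgroup.closure (cs.simple '' J)) w m := by
  induction hn : ℓ w using Nat.strong_induction_on generalizing w with
  | _ n ih =>
  rcases eq_or_ne w 1 with rfl | hw
  · exact ⟨1, isGreatestBelow_one _⟩
  obtain ⟨i, hi⟩ := cs.exists_leftDescent_of_ne_one hw
  obtain ⟨m, hm⟩ := ih _ (hn ▸ hi) (s i * w) rfl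
  by_cases hs : s i ∈ Subgroup.closure (cs.simple '' J)
  · exact hm.exists_of_simple_mul_of_mem hi hs
  · exact ⟨m, hm.of_simple_mul_of_not_mem hi hs⟩

end CoxeterSystem

theorem unique_maximal_below_in_parabolic_general {B W : Type*} [Group W]
    {M : CoxeterMatrix B} (cs : CoxeterSystem M W) (J : Set B) (w : W) :
    ∃! m : W, m ∈ Subgroup.closure (cs.simple '' J) ∧ cs.bruhatLE m w ∧
      ∀ u ∈ Subgroup.closure (cs.simple '' J), cs.bruhatLE u w → cs.bruhatLE u m := by
  obtain ⟨m, hm⟩ := cs.exists_isGreatestBelow_closure_simple J w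
  exact ⟨m, hm, fun m' hm' => CoxeterSystem.IsGreatestBelow.unique hm' hm⟩

/-- For any element `w` of a finite Coxeter group and any subset `J` of the simple
reflections, the parabolic subgroup `W_J` contains a unique maximal element (in Bruhat
order) among its elements lying below `w`. -/
theorem unique_maximal_below_in_parabolic {B W : Type*} [Group W] [Finite W]
    {M : CoxeterMatrix B} (cs : CoxeterSystem M W) (J : Set B) (w : W) :
    ∃! m : W, m ∈ Subgroup.closure (cs.simple '' J) ∧ cs.bruhatLE m w ∧
      ∀ u ∈ Subgroup.closure (cs.simple '' J), cs.bruhatLE u w → cs.bruhatLE u m :=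
  unique_maximal_below_in_parabolic_general cs J w
end

section
/- In the poset M(n) with n ≥ 2, an element A ⊆ [n] has exactly one element covered by it (i.e. |D(A)| = 1) and A ≠ ∅ if and only if A is a set of consecutive integers {j, j+1, ..., k} for some 1 ≤ j ≤ k ≤ n. -/
/-!
Counting tails, `tailCard A t = #{a ∈ A | t ≤ a}`, turns the order of `M(n)` into the pointwise
order of functions `ℕ → ℕ`, and `∑ t ∈ [1, n], tailCard A t = ∑ a ∈ A, a` is then a strictly
monotone rank. An element covered by `A` must therefore lie below `A` with rank one less; it is
obtained by lowering the first element `a` of a maximal run of consecutive elements of `A` to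
`a - 1` (deleting it if `a = 1`), and distinct runs give distinct such elements. So `A` covers
exactly one element iff it consists of a single run, i.e. is an interval.
-/

/-- The `i`-th largest element of a finite set of naturals (`i = 0` gives the largest);
defaults to `0` out of range. -/
def kthLargest (A : Finset ℕ) (i : ℕ) : ℕ :=
  ((A.sort (· ≤ ·)).reverse).getD i 0

/-- The order on `M(n)`: for `A = {a_1 < ... < a_j}` and `B = {b_1 < ... < b_k}`,
`A ⪯ B` iff `j ≤ k` and the `i`-th largest element of `A` is at most the `i`-th largest
element of `B` for all `0 ≤ i ≤ j - 1`. -/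
def MLE (A B : Finset ℕ) : Prop :=
  A.card ≤ B.card ∧ ∀ i < A.card, kthLargest A i ≤ kthLargest B i

/-- Strict version of `MLE`. -/
def MLT (A B : Finset ℕ) : Prop := MLE A B ∧ A ≠ B

/-- The covering relation of the poset `M(n)` (subsets of `{1, ..., n}` ordered by `MLE`). -/
def MCovBy (n : ℕ) (A B : Finset ℕ) : Prop :=
  MLT A B ∧ ∀ C ⊆ Finset.Icc 1 n, ¬(MLT A C ∧ MLT C B)

open Finset

theorem existsUnique_iff_of_injOn {α β : Type*} {p : α → Prop} {q : β → Prop} {f : α → β}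
    (hf : Set.InjOn f {a | p a}) (hq : ∀ b, q b ↔ ∃ a, p a ∧ f a = b) :
    (∃! b, q b) ↔ ∃! a, p a := by
  constructor
  · rintro ⟨_, hb, huniq⟩
    obtain ⟨a, ha, rfl⟩ := (hq _).1 hb
    exact ⟨a, ha, fun a' ha' => hf ha' ha (huniq _ ((hq _).2 ⟨a', ha', rfl⟩))⟩
  · rintro ⟨a, ha, huniq⟩
    refine ⟨f a, (hq _).2 ⟨a, ha, rfl⟩, fun b hb => ?_⟩
    obtain ⟨a', ha', rfl⟩ := (hq b).1 hb
    rw [huniq a' ha']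

def tailCard (A : Finset ℕ) (t : ℕ) : ℕ := #{a ∈ A | t ≤ a}

section TailCard

variable {A : Finset ℕ}

lemma tailCard_antitone (A : Finset ℕ) : Antitone (tailCard A) :=
  fun _ _ hst => card_le_card fun _ ha => by
    simp only [mem_filter] at ha ⊢; exact ⟨ha.1, hst.trans ha.2⟩

lemma tailCard_zero (A : Finset ℕ) : tailCard A 0 = #A := by
  simp [tailCard]

lemma tailCard_eq_tailCard_succ_add (A : Finset ℕ) (t : ℕ) :
    tailCard A t = tailCard A (t + 1) + if t ∈ A then 1 else 0 := by
  have hsplit : {a ∈ A | t ≤ a} = {a ∈ A | t + 1 ≤ a} ∪ {a ∈ A | a = t} := by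
    ext a; simp only [mem_filter, mem_union]; grind
  have hdisj : Disjoint {a ∈ A | t + 1 ≤ a} {a ∈ A | a = t} :=
    disjoint_filter.2 fun _ _ h h' => by omega
  rw [tailCard, tailCard, hsplit, card_union_of_disjoint hdisj, filter_eq' A t]
  split_ifs <;> simp

lemma mem_iff_tailCard_succ_lt {t : ℕ} : t ∈ A ↔ tailCard A (t + 1) < tailCard A t := by
  rw [tailCard_eq_tailCard_succ_add A t]; split_ifs <;> simp_all

lemma tailCard_zero_eq_tailCard_one (h0 : 0 ∉ A) : tailCard A 0 = tailCard A 1 := by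
  simp [tailCard_eq_tailCard_succ_add A 0, h0]

lemma tailCard_injective : Function.Injective tailCard := by
  intro A B h
  ext t
  rw [mem_iff_tailCard_succ_lt, mem_iff_tailCard_succ_lt, h]

lemma tailCard_eq_zero {t : ℕ} (h : ∀ a ∈ A, a < t) : tailCard A t = 0 :=
  card_eq_zero.2 <| filter_eq_empty_iff.2 fun a ha => by have := h a ha; omega

lemma tailCard_insert {x : ℕ} (hx : x ∉ A) (t : ℕ) :
    tailCard (insert x A) t = tailCard A t + if t ≤ x then 1 else 0 := by
  rw [tailCard, tailCard, filter_insert]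
  split_ifs
  · rw [card_insert_of_notMem (by simp [hx])]
  · rfl

lemma tailCard_erase_add {x : ℕ} (hx : x ∈ A) (t : ℕ) :
    tailCard (A.erase x) t + (if t ≤ x then 1 else 0) = tailCard A t := by
  rw [← tailCard_insert (notMem_erase x A), insert_erase hx]

lemma sum_tailCard_Icc {n : ℕ} (hA : ∀ a ∈ A, a ≤ n) :
    ∑ t ∈ Icc 1 n, tailCard A t = ∑ a ∈ A, a := by
  simp only [tailCard, card_filter]
  rw [sum_comm]
  refine sum_congr rfl fun a ha => ?_
  have hIcc : {t ∈ Icc 1 n | t ≤ a} = Icc 1 a := by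
    ext t; simp only [mem_filter, mem_Icc]; have := hA a ha; omega
  rw [← card_filter, hIcc, Nat.card_Icc, Nat.add_sub_cancel]

lemma tailCard_le_of_forall_one_le {X Y : Finset ℕ} (hX : 0 ∉ X) (hY : 0 ∉ Y)
    (h : ∀ t, 1 ≤ t → tailCard X t ≤ tailCard Y t) : tailCard X ≤ tailCard Y := by
  intro t
  obtain rfl | ht := Nat.eq_zero_or_pos t
  · rw [tailCard_zero_eq_tailCard_one hX, tailCard_zero_eq_tailCard_one hY]
    exact h 1 le_rfl
  · exact h t ht

end TailCard

theorem List.Pairwise.le_getElem_iff_lt_countP {α : Type*} [LinearOrder α] {l : List α}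
    (hl : l.Pairwise (· ≥ ·)) {i : ℕ} (hi : i < l.length) (t : α) :
    t ≤ l[i] ↔ i < l.countP (t ≤ ·) := by
  induction l generalizing i with
  | nil => simp at hi
  | cons a l ih =>
    obtain ⟨ha, hl⟩ := List.pairwise_cons.1 hl
    rw [List.countP_cons]
    by_cases hta : t ≤ a
    · cases i with
      | zero => simp [hta]
      | succ j => simp [ih hl (by simpa using hi), hta]
    · have hcount : l.countP (t ≤ ·) = 0 :=
        List.countP_eq_zero.2 fun b hb => by have := ha b hb; simp; order
      cases i with
      | zero => simp [hcount, hta]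
      | succ j =>
        have := ha _ (List.getElem_mem (by simpa using hi : j < l.length))
        simp [hcount, hta]; order

lemma countP_reverse_sort (A : Finset ℕ) (t : ℕ) :
    ((A.sort (· ≤ ·)).reverse).countP (t ≤ ·) = tailCard A t := by
  rw [List.countP_reverse, ← Multiset.coe_countP, Finset.sort_eq, Multiset.countP_eq_card_filter]
  rfl

lemma le_kthLargest_iff {A : Finset ℕ} {i : ℕ} (hi : i < #A) (t : ℕ) :
    t ≤ kthLargest A i ↔ i < tailCard A t := by
  have hlen : i < ((A.sort (· ≤ ·)).reverse).length := by simpa using hi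
  have hsorted : ((A.sort (· ≤ ·)).reverse).Pairwise (· ≥ ·) :=
    List.pairwise_reverse.2 (Finset.pairwise_sort A (· ≤ ·))
  rw [kthLargest, List.getD_eq_getElem _ _ hlen, hsorted.le_getElem_iff_lt_countP hlen,
    countP_reverse_sort]

lemma mle_iff_tailCard_le {A B : Finset ℕ} : MLE A B ↔ tailCard A ≤ tailCard B := by
  constructor
  · rintro ⟨hcard, hk⟩ t
    show tailCard A t ≤ tailCard B t
    obtain h0 | hpos := Nat.eq_zero_or_pos (tailCard A t)
    · simp [h0]
    have hi : tailCard A t - 1 < #A := by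
      have := tailCard_antitone A (Nat.zero_le t); rw [tailCard_zero] at this; omega
    have hAt := (le_kthLargest_iff hi t).2 (by omega)
    have hBt := (le_kthLargest_iff (hi.trans_le hcard) t).1 (hAt.trans (hk _ hi))
    omega
  · intro h
    have hcard : #A ≤ #B := by simpa only [tailCard_zero] using h 0
    refine ⟨hcard, fun i hi => ?_⟩
    rw [le_kthLargest_iff (hi.trans_le hcard)]
    exact ((le_kthLargest_iff hi _).1 le_rfl).trans_le (h _)

lemma mlt_iff_tailCard_lt {A B : Finset ℕ} : MLT A B ↔ tailCard A < tailCard B := by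
  rw [MLT, mle_iff_tailCard_le, lt_iff_le_and_ne, tailCard_injective.ne_iff]

lemma zero_notMem_of_subset_Icc {n : ℕ} {X : Finset ℕ} (hX : X ⊆ Icc 1 n) : 0 ∉ X :=
  fun h => by simpa using hX h

lemma sum_lt_sum_of_mlt {n : ℕ} {A B : Finset ℕ} (hA : A ⊆ Icc 1 n) (hB : B ⊆ Icc 1 n)
    (h : MLT B A) : ∑ b ∈ B, b < ∑ a ∈ A, a := by
  have hle (X : Finset ℕ) (hX : X ⊆ Icc 1 n) : ∀ x ∈ X, x ≤ n := fun x hx => (mem_Icc.1 (hX hx)).2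
  rw [← sum_tailCard_Icc (hle A hA), ← sum_tailCard_Icc (hle B hB)]
  obtain ⟨hBA, t, ht⟩ := Pi.lt_def.1 (mlt_iff_tailCard_lt.1 h)
  have ht' : tailCard B (max t 1) < tailCard A (max t 1) := by
    obtain rfl | ht0 := Nat.eq_zero_or_pos t
    · rwa [tailCard_zero_eq_tailCard_one (zero_notMem_of_subset_Icc hA),
        tailCard_zero_eq_tailCard_one (zero_notMem_of_subset_Icc hB)] at ht
    · rwa [max_eq_left ht0]
  refine sum_lt_sum (fun s _ => hBA s) ⟨max t 1, mem_Icc.2 ⟨le_max_right _ _, ?_⟩, ht'⟩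
  by_contra! htn
  rw [tailCard_eq_zero fun a ha => (hle A hA a ha).trans_lt htn] at ht'
  omega

-- Truncated subtraction makes `0` a non-start (`0 - 1 = 0`), while `1` is a start whenever `1 ∈ A`.
def IsRunStart (A : Finset ℕ) (a : ℕ) : Prop := a ∈ A ∧ a - 1 ∉ A

lemma IsRunStart.pos {A : Finset ℕ} {a : ℕ} (h : IsRunStart A a) : 0 < a :=
  Nat.pos_of_ne_zero fun ha => h.2 (by simpa [ha] using h.1)

-- The element of `D(A)` attached to the run starting at `a`.
def lowerAt (A : Finset ℕ) (a : ℕ) : Finset ℕ :=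
  if a = 1 then A.erase 1 else insert (a - 1) (A.erase a)

section lowerAt

variable {A : Finset ℕ} {a : ℕ}

lemma lowerAt_subset_Icc {n : ℕ} (hA : A ⊆ Icc 1 n) (ha : a ∈ A) : lowerAt A a ⊆ Icc 1 n := by
  have := mem_Icc.1 (hA ha)
  unfold lowerAt
  split_ifs
  · exact (erase_subset _ _).trans hA
  · exact insert_subset (mem_Icc.2 (by omega)) ((erase_subset _ _).trans hA)

lemma self_notMem_lowerAt (ha : IsRunStart A a) : a ∉ lowerAt A a := by
  have := ha.pos
  unfold lowerAt
  split_ifs with h1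
  · simp [h1]
  · simp only [mem_insert, mem_erase, ne_eq, not_true_eq_false, false_and, or_false]
    omega

lemma mem_lowerAt_of_ne {b : ℕ} (hb : b ∈ A) (hba : b ≠ a) : b ∈ lowerAt A a := by
  unfold lowerAt
  split_ifs with h1
  · exact mem_erase.2 ⟨h1 ▸ hba, hb⟩
  · exact mem_insert_of_mem (mem_erase.2 ⟨hba, hb⟩)

lemma tailCard_lowerAt_add (ha : IsRunStart A a) {t : ℕ} (ht : 1 ≤ t) :
    tailCard (lowerAt A a) t + (if t = a then 1 else 0) = tailCard A t := by
  have := ha.pos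
  have herase := tailCard_erase_add ha.1 t
  by_cases h1 : a = 1
  · rw [lowerAt, if_pos h1, ← h1]
    split_ifs at herase ⊢ <;> omega
  · rw [lowerAt, if_neg h1, tailCard_insert fun h => ha.2 (mem_of_mem_erase h)]
    split_ifs at herase ⊢ <;> omega

lemma sum_lowerAt_add_one (ha : IsRunStart A a) : ∑ b ∈ lowerAt A a, b + 1 = ∑ b ∈ A, b := by
  have := ha.pos
  rw [← sum_erase_add _ _ ha.1]
  unfold lowerAt
  split_ifs with h1
  · subst h1; rfl
  · rw [sum_insert fun h => ha.2 (mem_of_mem_erase h)]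
    omega

end lowerAt

section Covers

variable {n : ℕ} {A B : Finset ℕ} {a : ℕ}

lemma mcovBy_lowerAt (hA : A ⊆ Icc 1 n) (ha : IsRunStart A a) : MCovBy n (lowerAt A a) A := by
  have hsub := lowerAt_subset_Icc hA ha.1
  have hlt : MLT (lowerAt A a) A := by
    refine ⟨mle_iff_tailCard_le.2 <| tailCard_le_of_forall_one_le (zero_notMem_of_subset_Icc hsub)
      (zero_notMem_of_subset_Icc hA) fun t ht => ?_,
      fun h => self_notMem_lowerAt ha (by rw [h]; exact ha.1)⟩
    have := tailCard_lowerAt_add ha ht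
    omega
  refine ⟨hlt, fun C hC ⟨hlowC, hCA⟩ => ?_⟩
  have := sum_lt_sum_of_mlt hC hsub hlowC
  have := sum_lt_sum_of_mlt hA hC hCA
  have := sum_lowerAt_add_one ha
  omega

lemma exists_isRunStart_mle_lowerAt (hA : A ⊆ Icc 1 n) (hB : B ⊆ Icc 1 n) (h : MLT B A) :
    ∃ a, IsRunStart A a ∧ MLE B (lowerAt A a) := by
  have h0A := zero_notMem_of_subset_Icc hA
  obtain ⟨hBA, s, hs⟩ := Pi.lt_def.1 (mlt_iff_tailCard_lt.1 h)
  -- the least element of `A` above `s` still witnesses the strict inequality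
  have hex : ∃ a, a ∈ A ∧ tailCard B a < tailCard A a := by
    have hne : {a ∈ A | s ≤ a}.Nonempty := card_pos.1 (by unfold tailCard at hs; omega)
    obtain ⟨hmA, hsm⟩ := mem_filter.1 (min'_mem _ hne)
    have hAm : tailCard A ({a ∈ A | s ≤ a}.min' hne) = tailCard A s :=
      congrArg card <| filter_congr fun x hx =>
        ⟨hsm.trans, fun hsx => min'_le _ _ (mem_filter.2 ⟨hx, hsx⟩)⟩
    exact ⟨_, hmA, (tailCard_antitone B hsm).trans_lt (hAm ▸ hs)⟩
  -- the least such element starts a run: otherwise its predecessor would be a smaller one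
  obtain ⟨a, ⟨haA, hlt⟩, hmin⟩ : ∃ a, (a ∈ A ∧ tailCard B a < tailCard A a) ∧
      ∀ b < a, ¬(b ∈ A ∧ tailCard B b < tailCard A b) :=
    ⟨Nat.find hex, Nat.find_spec hex, fun _ => Nat.find_min hex⟩
  have hpos : 0 < a := Nat.pos_of_ne_zero fun h => h0A (h ▸ haA)
  have hrun : IsRunStart A a := by
    refine ⟨haA, fun hprev => hmin _ (Nat.sub_lt hpos one_pos) ⟨hprev, ?_⟩⟩
    have hA' := tailCard_eq_tailCard_succ_add A (a - 1)
    have hB' := tailCard_eq_tailCard_succ_add B (a - 1)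
    rw [Nat.sub_add_cancel hpos] at hA' hB'
    split_ifs at hA' hB' <;> omega
  refine ⟨a, hrun, mle_iff_tailCard_le.2 <| tailCard_le_of_forall_one_le
    (zero_notMem_of_subset_Icc hB)
    (zero_notMem_of_subset_Icc (lowerAt_subset_Icc hA haA)) fun t ht => ?_⟩
  have hlow := tailCard_lowerAt_add hrun ht
  have hle := hBA t
  split_ifs at hlow with hta
  · subst hta; omega
  · rwa [← hlow, add_zero] at hle

lemma MCovBy.exists_isRunStart_eq_lowerAt (hA : A ⊆ Icc 1 n) (hB : B ⊆ Icc 1 n)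
    (h : MCovBy n B A) : ∃ a, IsRunStart A a ∧ lowerAt A a = B := by
  obtain ⟨a, ha, hle⟩ := exists_isRunStart_mle_lowerAt hA hB h.1
  refine ⟨a, ha, by_contra fun hne => h.2 _ (lowerAt_subset_Icc hA ha.1)
    ⟨⟨hle, Ne.symm hne⟩, (mcovBy_lowerAt hA ha).1⟩⟩

lemma lowerAt_injOn : Set.InjOn (lowerAt A) {a | IsRunStart A a} := by
  intro a ha b hb hab
  by_contra hne
  exact self_notMem_lowerAt hb (hab ▸ mem_lowerAt_of_ne hb.1 (Ne.symm hne))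

end Covers

lemma existsUnique_isRunStart_iff {A : Finset ℕ} (h0 : 0 ∉ A) :
    (A.Nonempty ∧ ∃! a, IsRunStart A a) ↔ ∃ j k, 1 ≤ j ∧ j ≤ k ∧ A = Icc j k := by
  constructor
  · rintro ⟨hne, a, -, huniq⟩
    set j := A.min' hne
    set k := A.max' hne
    have hj0 : j ≠ 0 := fun h => h0 (h ▸ min'_mem A hne)
    have hj : IsRunStart A j := ⟨min'_mem A hne, fun h => by have := min'_le A _ h; omega⟩
    -- walking down from the maximum, every element other than `j` has its predecessor in `A`
    have hdown : ∀ d ≤ k - j, k - d ∈ A := by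
      intro d
      induction d with
      | zero => simpa using max'_mem A hne
      | succ d ih =>
        intro hd
        by_contra hc
        have hrun : IsRunStart A (k - d) := ⟨ih (by omega), by rwa [Nat.sub_sub]⟩
        have := (huniq _ hrun).trans (huniq _ hj).symm
        omega
    refine ⟨j, k, Nat.one_le_iff_ne_zero.2 hj0, min'_le A _ (max'_mem A hne), ?_⟩
    ext x
    refine ⟨fun hx => mem_Icc.2 ⟨min'_le A x hx, le_max' A x hx⟩, fun hx => ?_⟩
    have hx := mem_Icc.1 hx
    simpa [Nat.sub_sub_self hx.2] using hdown (k - x) (by omega)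
  · rintro ⟨j, k, hj, hjk, rfl⟩
    refine ⟨nonempty_Icc.2 hjk, j, ⟨mem_Icc.2 ⟨le_rfl, hjk⟩, by simp; omega⟩, ?_⟩
    rintro b ⟨hb, hb'⟩
    simp only [mem_Icc] at hb hb'
    omega

lemma subset_Icc_and_mcovBy_iff {n : ℕ} {A : Finset ℕ} (hA : A ⊆ Icc 1 n) (B : Finset ℕ) :
    (B ⊆ Icc 1 n ∧ MCovBy n B A) ↔ ∃ a, IsRunStart A a ∧ lowerAt A a = B := by
  refine ⟨fun ⟨hB, h⟩ => h.exists_isRunStart_eq_lowerAt hA hB, ?_⟩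
  rintro ⟨a, ha, rfl⟩
  exact ⟨lowerAt_subset_Icc hA ha.1, mcovBy_lowerAt hA ha⟩

theorem unique_covered_iff_consecutive_general (n : ℕ)
    (A : Finset ℕ) (hA : A ⊆ Finset.Icc 1 n) :
    ((∃! B : Finset ℕ, B ⊆ Finset.Icc 1 n ∧ MCovBy n B A) ∧ A ≠ ∅) ↔
      ∃ j k : ℕ, 1 ≤ j ∧ j ≤ k ∧ k ≤ n ∧ A = Finset.Icc j k := by
  rw [existsUnique_iff_of_injOn lowerAt_injOn (subset_Icc_and_mcovBy_iff hA), and_comm,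
    ← nonempty_iff_ne_empty, existsUnique_isRunStart_iff (zero_notMem_of_subset_Icc hA)]
  constructor
  · rintro ⟨j, k, hj, hjk, rfl⟩
    exact ⟨j, k, hj, hjk, (mem_Icc.1 (hA (right_mem_Icc.2 hjk))).2, rfl⟩
  · rintro ⟨j, k, hj, hjk, -, hAjk⟩
    exact ⟨j, k, hj, hjk, hAjk⟩

/-- In `M(n)` with `n ≥ 2`, an element `A ⊆ [n]` covers exactly one element and is
nonempty if and only if `A` is a set of consecutive integers `{j, j+1, ..., k}`
for some `1 ≤ j ≤ k ≤ n`. -/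
theorem unique_covered_iff_consecutive (n : ℕ) (hn : 2 ≤ n)
    (A : Finset ℕ) (hA : A ⊆ Finset.Icc 1 n) :
    ((∃! B : Finset ℕ, B ⊆ Finset.Icc 1 n ∧ MCovBy n B A) ∧ A ≠ ∅) ↔
      ∃ j k : ℕ, 1 ≤ j ∧ j ≤ k ∧ k ≤ n ∧ A = Finset.Icc j k :=
  unique_covered_iff_consecutive_general n A hA
end

section
/- In the poset M(n), the lower interval [∅, A] is rank-symmetric (palindromic) if and only if A = ∅, A = {k} for some 1 ≤ k ≤ n, or A = {1,2,...,k} for some 1 ≤ k ≤ n. -/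
open Finset

theorem List.Pairwise.getD_le_iff_countP_le {L : List ℕ} (hL : L.Pairwise (· ≥ ·)) {i : ℕ}
    (hi : i < L.length) (m : ℕ) : L.getD i 0 ≤ m ↔ L.countP (m < ·) ≤ i := by
  induction L generalizing i with
  | nil => simp at hi
  | cons x t ih =>
    rw [List.pairwise_cons] at hL
    by_cases hxm : x ≤ m
    · have ht : ∀ y ∈ t, y ≤ m := fun y hy => (hL.1 y hy).trans hxm
      have hcount : t.countP (m < ·) = 0 :=
        List.countP_eq_zero.2 fun y hy => by simpa using ht y hy
      cases i with
      | zero => simp [hxm, hcount]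
      | succ i =>
        have : t.getD i 0 ≤ m := by
          rw [List.getD_eq_getElem _ _ (by simpa using hi)]
          exact ht _ (List.getElem_mem _)
        rw [List.getD_cons_succ, List.countP_cons, hcount]
        exact iff_of_true this (by simp [not_lt.2 hxm])
    · cases i with
      | zero => simp [hxm, not_le.1 hxm]
      | succ i =>
        rw [List.getD_cons_succ, ih hL.2 (by simpa using hi), List.countP_cons]
        simp [not_le.1 hxm]

theorem kthLargest_le_iff {A : Finset ℕ} {i : ℕ} (hi : i < #A) (m : ℕ) :
    kthLargest A i ≤ m ↔ #{x ∈ A | m < x} ≤ i := by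
  have hL : (A.sort (· ≤ ·)).reverse.Pairwise (· ≥ ·) :=
    List.pairwise_reverse.2 (A.pairwise_sort _)
  rw [kthLargest, hL.getD_le_iff_countP_le (by simpa using hi), List.countP_reverse,
    ← Multiset.coe_countP, Finset.sort_eq, Multiset.countP_eq_card_filter]
  rfl

theorem mle_iff_card_filter_lt_le {B A : Finset ℕ} :
    MLE B A ↔ #B ≤ #A ∧ ∀ m, #{x ∈ B | m < x} ≤ #{x ∈ A | m < x} := by
  refine and_congr_right fun hcard => ⟨fun h m => ?_, fun h i hi => ?_⟩
  · by_contra! hlt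
    have hiB : #{x ∈ A | m < x} < #B := hlt.trans_le (card_filter_le _ _)
    have hA : kthLargest A #{x ∈ A | m < x} ≤ m :=
      (kthLargest_le_iff (hiB.trans_le hcard) m).2 le_rfl
    exact hlt.not_ge ((kthLargest_le_iff hiB m).1 ((h _ hiB).trans hA))
  · exact (kthLargest_le_iff hi _).2 <|
      (h _).trans ((kthLargest_le_iff (hi.trans_le hcard) _).1 le_rfl)

theorem mle_of_subset {B A : Finset ℕ} (h : B ⊆ A) : MLE B A :=
  mle_iff_card_filter_lt_le.2 ⟨card_le_card h, fun _ => card_le_card (filter_subset_filter _ h)⟩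

theorem mle_insert_erase {A : Finset ℕ} {a b : ℕ} (ha : a ∈ A) (hba : b ≤ a) :
    MLE (insert b (A.erase a)) A := by
  rw [mle_iff_card_filter_lt_le]
  refine ⟨(card_insert_le _ _).trans (card_erase_add_one ha).le, fun m => ?_⟩
  rw [filter_insert, filter_erase]
  split_ifs with hmb
  · have ha' : a ∈ A.filter (m < ·) := mem_filter.2 ⟨ha, hmb.trans_le hba⟩
    exact (card_insert_le _ _).trans (card_erase_add_one ha').le
  · exact card_le_card (erase_subset _ _)

theorem MLE.forall_le {B A : Finset ℕ} {k : ℕ} (h : MLE B A) (hA : ∀ a ∈ A, a ≤ k) :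
    ∀ b ∈ B, b ≤ k := by
  have hA' : #{x ∈ A | k < x} = 0 :=
    card_eq_zero.2 (filter_eq_empty_iff.2 fun a ha => (hA a ha).not_gt)
  have hB := (mle_iff_card_filter_lt_le.1 h).2 k
  rw [hA', Nat.le_zero, card_eq_zero, filter_eq_empty_iff] at hB
  exact fun b hb => not_lt.1 (hB hb)

theorem eq_singleton_of_sum_eq {B : Finset ℕ} {s : ℕ} (h0 : 0 ∉ B) (hs0 : 0 < s) (hs3 : s < 3)
    (h : ∑ x ∈ B, x = s) : B = {s} := by
  obtain ⟨b, hb⟩ : B.Nonempty := nonempty_of_sum_ne_zero (h ▸ hs0.ne')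
  have hB : B = {b} := by
    refine eq_singleton_iff_unique_mem.2 ⟨hb, fun c hc => ?_⟩
    by_contra hcb
    have hle : ∑ x ∈ {c, b}, x ≤ ∑ x ∈ B, x :=
      sum_le_sum_of_subset (insert_subset hc (singleton_subset_iff.2 hb))
    have hc0 : c ≠ 0 := fun h => h0 (h ▸ hc)
    have hb0 : b ≠ 0 := fun h => h0 (h ▸ hb)
    rw [sum_pair hcb] at hle
    omega
  rw [hB, sum_singleton] at h
  rw [hB, h]

theorem Finset.Icc_subset_of_pred_mem {A : Finset ℕ} {m M : ℕ} (hM : M ∈ A)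
    (h : ∀ a ∈ A, m < a → a - 1 ∈ A) : Icc m M ⊆ A := by
  have hdown : ∀ j, m + j ≤ M → M - j ∈ A := by
    intro j
    induction j with
    | zero => exact fun _ => hM
    | succ j ih => exact fun hj => Nat.sub_sub M j 1 ▸ h _ (ih (by omega)) (by omega)
  intro x hx
  rw [mem_Icc] at hx
  simpa [Nat.sub_sub_self hx.2] using hdown (M - x) (by omega)

theorem Finset.eq_Icc_min'_max'_of_pred_mem {A : Finset ℕ} (hne : A.Nonempty)
    (h : ∀ a ∈ A, A.min' hne < a → a - 1 ∈ A) : A = Icc (A.min' hne) (A.max' hne) :=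
  subset_antisymm (fun a ha => mem_Icc.2 ⟨A.min'_le a ha, A.le_max' a ha⟩)
    (Icc_subset_of_pred_mem (A.max'_mem hne) h)

open scoped Classical in
noncomputable def rankLevel (n : ℕ) (A : Finset ℕ) (i : ℕ) : Finset (Finset ℕ) :=
  (Finset.Icc 1 n).powerset.filter (fun B => MLE B A ∧ ∑ a ∈ B, a = i)

def IsPalindromic (n : ℕ) (A : Finset ℕ) : Prop :=
  ∀ i ≤ ∑ a ∈ A, a, #(rankLevel n A i) = #(rankLevel n A (∑ a ∈ A, a - i))

section rankLevel

variable {n : ℕ} {A B : Finset ℕ} {i : ℕ}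

theorem mem_rankLevel :
    B ∈ rankLevel n A i ↔ B ⊆ Icc 1 n ∧ MLE B A ∧ ∑ x ∈ B, x = i := by
  simp only [rankLevel, mem_filter, mem_powerset]

theorem card_rankLevel_le_one (hi0 : 0 < i) (hi3 : i < 3) : #(rankLevel n A i) ≤ 1 := by
  refine card_le_one.2 fun B hB C hC => ?_
  have hsingleton : ∀ D ∈ rankLevel n A i, D = {i} := fun D hD => by
    obtain ⟨hDn, -, hDi⟩ := mem_rankLevel.1 hD
    exact eq_singleton_of_sum_eq (fun h0 => by simpa using hDn h0) hi0 hi3 hDi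
  rw [hsingleton B hB, hsingleton C hC]

theorem erase_mem_rankLevel (hA : A ⊆ Icc 1 n) {a : ℕ} (ha : a ∈ A) :
    A.erase a ∈ rankLevel n A (∑ x ∈ A, x - a) := by
  refine mem_rankLevel.2 ⟨(erase_subset a A).trans hA, mle_of_subset (erase_subset a A), ?_⟩
  have := sum_erase_add A id ha
  simp only [id] at this
  omega

theorem insert_erase_mem_rankLevel (hA : A ⊆ Icc 1 n) {a b : ℕ} (ha : a ∈ A) (hb : b ∉ A)
    (hb0 : 0 < b) (hba : b ≤ a) :
    insert b (A.erase a) ∈ rankLevel n A (∑ x ∈ A, x - (a - b)) := by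
  have han : a ≤ n := (mem_Icc.1 (hA ha)).2
  refine mem_rankLevel.2 ⟨insert_subset (mem_Icc.2 ⟨hb0, by omega⟩)
    ((erase_subset a A).trans hA), mle_insert_erase ha hba, ?_⟩
  have hsum := sum_erase_add A id ha
  have haA : a ≤ ∑ x ∈ A, x := single_le_sum (f := id) (fun _ _ => Nat.zero_le _) ha
  simp only [id] at hsum
  rw [sum_insert fun h => hb (mem_of_mem_erase h)]
  omega

theorem exists_notMem_mem_rankLevel_sub (hA : A ⊆ Icc 1 n) {m d : ℕ} (hm : m ∈ A)
    (hmin : ∀ x ∈ A, m ≤ x) (hd0 : 0 < d) (hdm : d ≤ m) :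
    ∃ B ∈ rankLevel n A (∑ x ∈ A, x - d), m ∉ B := by
  rcases hdm.eq_or_lt with rfl | hdm
  · exact ⟨A.erase d, erase_mem_rankLevel hA hm, notMem_erase d A⟩
  · have hlow : m - d ∉ A := fun h => by have := hmin _ h; omega
    refine ⟨insert (m - d) (A.erase m), ?_, ?_⟩
    · simpa [Nat.sub_sub_self hdm.le] using
        insert_erase_mem_rankLevel hA hm hlow (by omega) (Nat.sub_le m d)
    · simp only [mem_insert, mem_erase, not_or]
      exact ⟨by omega, fun h => h.1 rfl⟩

theorem one_lt_card_rankLevel_sub (hA : A ⊆ Icc 1 n) {m a d : ℕ} (hm : m ∈ A)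
    (hmin : ∀ x ∈ A, m ≤ x) (ha : a ∈ A) (hma : m < a) (hdm : d ≤ m) (had : a - d ∉ A) :
    1 < #(rankLevel n A (∑ x ∈ A, x - d)) := by
  have hd0 : 0 < d := Nat.pos_of_ne_zero fun h => had (by simpa [h] using ha)
  obtain ⟨B, hB, hmB⟩ := exists_notMem_mem_rankLevel_sub hA hm hmin hd0 hdm
  have hB' := insert_erase_mem_rankLevel hA ha had (by omega) (Nat.sub_le a d)
  rw [Nat.sub_sub_self (by omega)] at hB'
  have hmB' : m ∈ insert (a - d) (A.erase a) := mem_insert_of_mem (mem_erase.2 ⟨hma.ne, hm⟩)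
  exact one_lt_card.2 ⟨_, hB', B, hB, fun h => hmB (h ▸ hmB')⟩

theorem IsPalindromic.sub_mem (h : IsPalindromic n A) (hA : A ⊆ Icc 1 n) {m a d : ℕ}
    (hm : m ∈ A) (hmin : ∀ x ∈ A, m ≤ x) (ha : a ∈ A) (hma : m < a) (hd0 : 0 < d)
    (hd3 : d < 3) (hdm : d ≤ m) : a - d ∈ A := by
  by_contra had
  have hdA : d ≤ ∑ x ∈ A, x :=
    hdm.trans (single_le_sum (f := id) (fun _ _ => Nat.zero_le _) hm)
  have hle : #(rankLevel n A (∑ x ∈ A, x - d)) ≤ 1 :=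
    h d hdA ▸ card_rankLevel_le_one hd0 hd3
  exact (one_lt_card_rankLevel_sub hA hm hmin ha hma hdm had).not_ge hle

theorem IsPalindromic.eq_Icc_min'_max' (h : IsPalindromic n A) (hA : A ⊆ Icc 1 n)
    (hne : A.Nonempty) : A = Icc (A.min' hne) (A.max' hne) :=
  eq_Icc_min'_max'_of_pred_mem hne fun _ ha hma =>
    h.sub_mem hA (min'_mem A hne) (min'_le A) ha hma one_pos (by norm_num)
      (mem_Icc.1 (hA (min'_mem A hne))).1

theorem IsPalindromic.min'_eq_one_or_eq_max' (h : IsPalindromic n A) (hA : A ⊆ Icc 1 n)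
    (hne : A.Nonempty) : A.min' hne = 1 ∨ A.min' hne = A.max' hne := by
  by_contra! hm
  have hm2 : 2 ≤ A.min' hne := by have := (mem_Icc.1 (hA (min'_mem A hne))).1; omega
  have hmM : A.min' hne < A.max' hne := (min'_le A _ (max'_mem A hne)).lt_of_ne hm.2
  have hsucc : A.min' hne + 1 ∈ A :=
    (Finset.ext_iff.1 (h.eq_Icc_min'_max' hA hne) _).2 (mem_Icc.2 ⟨by omega, by omega⟩)
  have hpred :=
    h.sub_mem hA (min'_mem A hne) (min'_le A) hsucc (by omega) two_pos (by norm_num) hm2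
  have := min'_le A _ hpred
  omega

theorem isPalindromic_empty : IsPalindromic n ∅ := fun i hi => by
  rw [sum_empty, Nat.le_zero] at hi
  rw [hi, sum_empty, Nat.sub_zero]

theorem rankLevel_singleton {k v : ℕ} (hk : k ≤ n) (hv : v ≤ k) :
    rankLevel n {k} v = {({v} : Finset ℕ).erase 0} := by
  ext B
  rw [mem_rankLevel, mem_singleton]
  constructor
  · rintro ⟨hBn, hBk, rfl⟩
    have h0 : 0 ∉ B := fun h0 => by simpa using hBn h0
    obtain ⟨b, hb⟩ := card_le_one_iff_subset_singleton.1 (by simpa using hBk.1)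
    rcases subset_singleton_iff.1 hb with rfl | rfl
    · simp
    · rw [sum_singleton, erase_eq_of_notMem h0]
  · rintro rfl
    rcases v.eq_zero_or_pos with rfl | hv0
    · simpa using mle_of_subset (empty_subset {k})
    · rw [erase_eq_of_notMem (by simpa using hv0.ne)]
      refine ⟨singleton_subset_iff.2 (mem_Icc.2 ⟨hv0, hv.trans hk⟩), ?_, sum_singleton _ _⟩
      simpa using mle_insert_erase (mem_singleton_self k) hv

theorem isPalindromic_singleton {k : ℕ} (hk : k ≤ n) : IsPalindromic n {k} := fun i hi => by
  rw [sum_singleton] at hi ⊢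
  rw [rankLevel_singleton hk hi, rankLevel_singleton hk (Nat.sub_le k i), card_singleton,
    card_singleton]

theorem card_filter_powerset_sum_eq_sub {ι : Type*} [DecidableEq ι] (s : Finset ι)
    (f : ι → ℕ) {i : ℕ} (hi : i ≤ ∑ x ∈ s, f x) :
    #{B ∈ s.powerset | ∑ x ∈ B, f x = i} =
      #{B ∈ s.powerset | ∑ x ∈ B, f x = ∑ x ∈ s, f x - i} := by
  have hmaps : ∀ j k, j + k = ∑ x ∈ s, f x →
      ∀ B ∈ {B ∈ s.powerset | ∑ x ∈ B, f x = j},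
        s \ B ∈ {B ∈ s.powerset | ∑ x ∈ B, f x = k} := by
    intro j k hjk B hB
    rw [mem_filter, mem_powerset] at hB ⊢
    have := sum_sdiff (f := f) hB.1
    exact ⟨sdiff_subset, by omega⟩
  have hinv : ∀ j, ∀ B ∈ {B ∈ s.powerset | ∑ x ∈ B, f x = j}, s \ (s \ B) = B :=
    fun j B hB => Finset.sdiff_sdiff_eq_self (mem_powerset.1 (mem_filter.1 hB).1)
  exact card_bij' (fun B _ => s \ B) (fun B _ => s \ B) (hmaps i _ (by omega))
    (hmaps (∑ x ∈ s, f x - i) i (by omega)) (hinv i) (hinv _)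

theorem rankLevel_Icc_one {k : ℕ} (hk : k ≤ n) :
    rankLevel n (Icc 1 k) i = {B ∈ (Icc 1 k).powerset | ∑ x ∈ B, x = i} := by
  ext B
  rw [mem_rankLevel, mem_filter, mem_powerset]
  constructor
  · rintro ⟨hBn, hBk, hBi⟩
    refine ⟨fun b hb => mem_Icc.2 ⟨(mem_Icc.1 (hBn hb)).1, ?_⟩, hBi⟩
    exact hBk.forall_le (fun a ha => (mem_Icc.1 ha).2) b hb
  · rintro ⟨hBk, hBi⟩
    exact ⟨hBk.trans (Icc_subset_Icc_right hk), mle_of_subset hBk, hBi⟩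

theorem isPalindromic_Icc_one {k : ℕ} (hk : k ≤ n) : IsPalindromic n (Icc 1 k) := fun i hi => by
  rw [rankLevel_Icc_one hk, rankLevel_Icc_one hk]
  exact card_filter_powerset_sum_eq_sub _ (fun x => x) hi

end rankLevel

open scoped Classical in
/-- In `M(n)`, the lower interval `[∅, A]` is rank-symmetric (palindromic) with respect to
the rank function `rk(A) = Σ_{a ∈ A} a` if and only if `A = ∅`, `A = {k}` for some
`1 ≤ k ≤ n`, or `A = {1, ..., k}` for some `1 ≤ k ≤ n`. -/
theorem palindromic_iff (n : ℕ) (A : Finset ℕ) (hA : A ⊆ Finset.Icc 1 n) :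
    (∀ i ≤ ∑ a ∈ A, a,
      ((Finset.Icc 1 n).powerset.filter (fun B => MLE B A ∧ ∑ a ∈ B, a = i)).card =
      ((Finset.Icc 1 n).powerset.filter
        (fun B => MLE B A ∧ ∑ a ∈ B, a = (∑ a ∈ A, a) - i)).card) ↔
    (A = ∅ ∨ (∃ k : ℕ, 1 ≤ k ∧ k ≤ n ∧ A = {k}) ∨
      (∃ k : ℕ, 1 ≤ k ∧ k ≤ n ∧ A = Finset.Icc 1 k)) := by
  change IsPalindromic n A ↔ _
  refine ⟨fun h => ?_, ?_⟩
  · rcases A.eq_empty_or_nonempty with rfl | hne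
    · exact Or.inl rfl
    have hM := mem_Icc.1 (hA (max'_mem A hne))
    rcases h.min'_eq_one_or_eq_max' hA hne with hm | hm
    · exact Or.inr <| Or.inr ⟨_, hM.1, hM.2, hm ▸ h.eq_Icc_min'_max' hA hne⟩
    · have hIcc := h.eq_Icc_min'_max' hA hne
      rw [hm, Icc_self] at hIcc
      exact Or.inr <| Or.inl ⟨_, hM.1, hM.2, hIcc⟩
  · rintro (rfl | ⟨k, -, hk, rfl⟩ | ⟨k, -, hk, rfl⟩)
    · exact isPalindromic_empty
    · exact isPalindromic_singleton hk
    · exact isPalindromic_Icc_one hk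
end
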